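/- Positivity of the hydrostatic-reconstruction layer-averaged kinetic scheme with topography: under the CFL condition Δt < Δx_i / ( |u_{α,i}| + 2 √(2 g h_i) ) for all α and i, the updated kinetic densities satisfy M⁺_{α,i}(ξ) ≥ 0 for all α = 1,…,N, all i ∈ ℤ and all ξ ∈ ℝ. -/

import Mathlib

/-!
The explicit step is monotone: since the hydrostatic reconstruction never raises the water
height, `0 ≤ M_{α,i±1/2∓} ≤ M_{α,i}`, and the topography terms recombine the update into
`M_{α,i}` minus `σ_i` times a combination of reconstructed densities whose coefficients
have absolute values summing to `|u_{α,i}| + |ξ - u_{α,i}|`, plus a nonnegative upwind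
inflow. On the support of `M_{α,i}` the CFL condition bounds that sum by `1/σ_i`, so
`M* ≥ 0`.

The implicit step is a conservative upwind exchange between neighbouring layers. Summing it
over the set of layers where `M⁺ < 0`, the exchange terms add up (by summation by parts) to
the fluxes across the boundary of that set, and upwinding makes each of them point into it;
so this sum of negative numbers would equal a sum of nonnegative ones.
-/

open Finset

/-- The kinetic Maxwellian `M̄(h,u,ξ) = (1/(gπ))·max(2gh − (ξ−u)², 0)^{1/2}`. -/
noncomputable def Mbar (g h u ξ : ℝ) : ℝ :=
  Real.sqrt (max (2 * g * h - (ξ - u) ^ 2) 0) / (g * Real.pi)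

section Maxwellian

variable {g : ℝ}

lemma Mbar_nonneg (hg : 0 ≤ g) (h u ξ : ℝ) : 0 ≤ Mbar g h u ξ := by
  unfold Mbar
  positivity

lemma Mbar_mono (hg : 0 ≤ g) (u ξ : ℝ) : Monotone fun h => Mbar g h u ξ := by
  intro h₁ h₂ hle
  apply div_le_div_of_nonneg_right _ (by positivity)
  gcongr

lemma abs_sub_le_sqrt_of_Mbar_ne_zero {h u ξ : ℝ} (hne : Mbar g h u ξ ≠ 0) :
    |ξ - u| ≤ Real.sqrt (2 * g * h) := by
  have hpos : 0 < 2 * g * h - (ξ - u) ^ 2 := by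
    by_contra! hle
    exact hne (by simp [Mbar, max_eq_right hle])
  rw [← Real.sqrt_sq_eq_abs]
  exact Real.sqrt_le_sqrt (by linarith)

/-- The CFL condition is only needed on the support of the Maxwellian, where
`|ξ - u| ≤ √(2gh)`. -/
lemma cfl_mul_Mbar_le (hg : 0 ≤ g) {σ h u : ℝ} (hσ : 0 ≤ σ)
    (hcfl : σ * (|u| + Real.sqrt (2 * g * h)) ≤ 1) (ξ : ℝ) : σ * (|u| + |ξ - u|) * Mbar g h u ξ ≤ Mbar g h u ξ := by
  by_cases hz : Mbar g h u ξ = 0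
  · simp [hz]
  · have hbound : σ * (|u| + |ξ - u|) ≤ 1 :=
      (mul_le_mul_of_nonneg_left (by linarith [abs_sub_le_sqrt_of_Mbar_ne_zero hz]) hσ).trans
        hcfl
    exact mul_le_of_le_one_left (Mbar_nonneg hg _ _ _) hbound

end Maxwellian

lemma hydrostatic_height_le {h z z' : ℝ} (hh : 0 ≤ h) (hz : z ≤ z') :
    max (h + z - z') 0 ≤ h :=
  max_le (by linarith) hh

lemma mul_add_mul_le_abs_add_abs_mul {p q A B C : ℝ} (hB : 0 ≤ B) (hBA : B ≤ A) (hC : 0 ≤ C)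
    (hCA : C ≤ A) : p * B + q * C ≤ (|p| + |q|) * A := by
  have hp : p * B ≤ |p| * A := mul_le_mul (le_abs_self p) hBA hB (abs_nonneg p)
  have hq : q * C ≤ |q| * A := mul_le_mul (le_abs_self q) hCA hC (abs_nonneg q)
  linarith

/-- One cell of the explicit step, for a velocity `ξ`: `A` is the cell density, `B` and `C`
its reconstructions at the right and left interfaces, `D` and `E` the upwind densities
entering from the left and right neighbours. -/
lemma kinetic_update_nonneg {σ ξ u A B C D E : ℝ} (hσ : 0 ≤ σ) (hB : 0 ≤ B) (hBA : B ≤ A)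
    (hC : 0 ≤ C) (hCA : C ≤ A) (hD : 0 ≤ D) (hE : 0 ≤ E)
    (hcfl : σ * (|u| + |ξ - u|) * A ≤ A) :
    0 ≤ A - σ * (ξ * (if 0 < ξ then B else E) + (ξ - u) * (A - B)
      - ξ * (if 0 < ξ then D else C) - (ξ - u) * (A - C)) := by
  split_ifs with hξ
  · have hout := mul_le_mul_of_nonneg_left
      (mul_add_mul_le_abs_add_abs_mul (p := u) (q := ξ - u) hB hBA hC hCA) hσ
    nlinarith [mul_nonneg (mul_nonneg hσ hξ.le) hD]
  · have hout := mul_le_mul_of_nonneg_left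
      (mul_add_mul_le_abs_add_abs_mul (p := u - ξ) (q := -u) hB hBA hC hCA) hσ
    rw [abs_neg, abs_sub_comm, add_comm |ξ - u|] at hout
    nlinarith [mul_nonneg (mul_nonneg hσ (neg_nonneg.mpr (not_lt.mp hξ))) hE]

lemma Mstar_nonneg {g : ℝ} (hg : 0 ≤ g) {N : ℕ} {l : ℕ → ℝ} (hl : ∀ α ∈ Icc 1 N, 0 ≤ l α)
    {Δt : ℝ} (hΔt : 0 ≤ Δt) {Δx : ℤ → ℝ} (hΔx : ∀ i, 0 < Δx i)
    {σ : ℤ → ℝ} (hσ : ∀ i, σ i = Δt / Δx i) {zb h : ℤ → ℝ} (hh : ∀ i, 0 ≤ h i)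
    {u : ℕ → ℤ → ℝ} {zhalf : ℤ → ℝ} (hzhalf : ∀ i : ℤ, zhalf i = max (zb i) (zb (i + 1)))
    {hm : ℤ → ℝ} (hhm : ∀ i : ℤ, hm i = max (h i + zb i - zhalf i) 0)
    {hp : ℤ → ℝ} (hhp : ∀ i : ℤ, hp i = max (h (i + 1) + zb (i + 1) - zhalf i) 0)
    {M : ℕ → ℤ → ℝ → ℝ} (hM : ∀ α i ξ, M α i ξ = l α * Mbar g (h i) (u α i) ξ)
    {Mm : ℕ → ℤ → ℝ → ℝ} (hMm : ∀ α i ξ, Mm α i ξ = l α * Mbar g (hm i) (u α i) ξ)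
    {Mp : ℕ → ℤ → ℝ → ℝ} (hMp : ∀ α i ξ, Mp α i ξ = l α * Mbar g (hp i) (u α (i + 1)) ξ)
    {Mhalf : ℕ → ℤ → ℝ → ℝ}
    (hMhalf : ∀ α i ξ, Mhalf α i ξ = if 0 < ξ then Mm α i ξ else Mp α i ξ)
    {δp : ℕ → ℤ → ℝ → ℝ} (hδp : ∀ α i ξ, δp α i ξ = (ξ - u α i) * (M α i ξ - Mm α i ξ))
    {δm : ℕ → ℤ → ℝ → ℝ} (hδm : ∀ α i ξ, δm α i ξ = (ξ - u α i) * (M α i ξ - Mp α (i - 1) ξ))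
    {Mstar : ℕ → ℤ → ℝ → ℝ}
    (hMstar : ∀ α i ξ, Mstar α i ξ = M α i ξ
      - σ i * (ξ * Mhalf α i ξ + δp α i ξ - ξ * Mhalf α (i - 1) ξ - δm α i ξ))
    (CFL : ∀ α ∈ Icc 1 N, ∀ i : ℤ, (|u α i| + 2 * Real.sqrt (2 * g * h i)) * Δt < Δx i) :
    ∀ α ∈ Icc 1 N, ∀ i ξ, 0 ≤ Mstar α i ξ := by
  intro α hα i ξ
  have hlα := hl α hα
  have hσi : 0 ≤ σ i := by rw [hσ]; exact div_nonneg hΔt (hΔx i).le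
  have hdens : ∀ H v, 0 ≤ l α * Mbar g H v ξ := fun _ _ => mul_nonneg hlα (Mbar_nonneg hg _ _ _)
  have hrec : ∀ H, H ≤ h i → l α * Mbar g H (u α i) ξ ≤ M α i ξ := fun H hH => by
    rw [hM]; exact mul_le_mul_of_nonneg_left (Mbar_mono hg _ _ hH) hlα
  have hi : i - 1 + 1 = i := by ring
  have hBA : Mm α i ξ ≤ M α i ξ := by
    rw [hMm, hhm, hzhalf]; exact hrec _ (hydrostatic_height_le (hh i) (le_max_left _ _))
  have hCA : Mp α (i - 1) ξ ≤ M α i ξ := by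
    rw [hMp, hhp, hzhalf, hi]; exact hrec _ (hydrostatic_height_le (hh i) (le_max_right _ _))
  have hcfl : σ i * (|u α i| + |ξ - u α i|) * M α i ξ ≤ M α i ξ := by
    have hcflσ : σ i * (|u α i| + Real.sqrt (2 * g * h i)) ≤ 1 := by
      have := CFL α hα i
      rw [hσ, div_mul_eq_mul_div, div_le_one (hΔx i)]
      nlinarith [Real.sqrt_nonneg (2 * g * h i)]
    have := mul_le_mul_of_nonneg_left (cfl_mul_Mbar_le hg hσi hcflσ ξ) hlα
    rw [hM]; linarith
  rw [hMstar, hδp, hδm, hMhalf, hMhalf]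
  exact kinetic_update_nonneg hσi (by rw [hMm]; exact hdens _ _) hBA
    (by rw [hMp]; exact hdens _ _) hCA (by rw [hMm]; exact hdens _ _) (by rw [hMp]; exact hdens _ _)
    hcfl

lemma sum_Icc_mul_sub_pred_eq (χ F : ℕ → ℝ) (hF0 : F 0 = 0) (n : ℕ) :
    ∑ k ∈ Icc 1 n, χ k * (F k - F (k - 1)) =
      ∑ k ∈ Icc 1 n, (χ k - χ (k + 1)) * F k + χ (n + 1) * F n := by
  induction n with
  | zero => simp [hF0]
  | succ m ih =>
    rw [sum_Icc_succ_top (by omega), sum_Icc_succ_top (by omega), ih, Nat.add_sub_cancel]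
    ring

lemma upwind_exchange_flux_nonneg {x y a b : ℝ} (ha : 0 ≤ a) (hb : 0 ≤ b) :
    0 ≤ ((if x < 0 then 1 else 0) - (if y < 0 then 1 else 0)) * (b * y - a * x) := by
  split_ifs <;> nlinarith

lemma nonneg_of_upwind_exchange {N : ℕ} {c : ℝ} {S X F : ℕ → ℝ} (hc : 0 ≤ c)
    (hS : ∀ k ∈ Icc 1 N, 0 ≤ S k) (hF0 : F 0 = 0) (hFN : F N = 0)
    (hF : ∀ k ∈ Icc 1 (N - 1), ∃ a b, 0 ≤ a ∧ 0 ≤ b ∧ F k = b * X (k + 1) - a * X k)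
    (hX : ∀ k ∈ Icc 1 N, X k = S k + c * (F k - F (k - 1))) :
    ∀ k ∈ Icc 1 N, 0 ≤ X k := by
  by_contra! ⟨k₀, hk₀, hneg⟩
  set χ : ℕ → ℝ := fun k => if X k < 0 then 1 else 0
  have hχ : ∀ k, 0 ≤ χ k := fun k => by dsimp only [χ]; split_ifs <;> norm_num
  have hsum_neg : ∑ k ∈ Icc 1 N, χ k * X k < 0 := by
    refine sum_neg' (fun k _ => ?_) ⟨k₀, hk₀, by simp [χ, hneg]⟩
    dsimp only [χ]; split_ifs <;> linarith
  have hexchange : 0 ≤ ∑ k ∈ Icc 1 N, χ k * (F k - F (k - 1)) := by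
    rw [sum_Icc_mul_sub_pred_eq χ F hF0, hFN, mul_zero, add_zero]
    refine sum_nonneg fun k hk => ?_
    rcases eq_or_ne k N with rfl | hkN
    · rw [hFN, mul_zero]
    · obtain ⟨a, b, ha, hb, hFk⟩ := hF k (by simp only [mem_Icc] at hk ⊢; omega)
      rw [hFk]
      exact upwind_exchange_flux_nonneg ha hb
  have hsum : ∑ k ∈ Icc 1 N, χ k * X k =
      ∑ k ∈ Icc 1 N, χ k * S k + c * ∑ k ∈ Icc 1 N, χ k * (F k - F (k - 1)) := by
    rw [mul_sum, ← sum_add_distrib]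
    refine sum_congr rfl fun k hk => ?_
    rw [hX k hk]; ring
  have hsource : 0 ≤ ∑ k ∈ Icc 1 N, χ k * S k :=
    sum_nonneg fun k hk => mul_nonneg (hχ k) (hS k hk)
  nlinarith [mul_nonneg hc hexchange]

lemma upwind_flux_eq {G H x y lx ly : ℝ} (hH : 0 ≤ H) (hlx : 0 ≤ lx) (hly : 0 ≤ ly) :
    ∃ a b, 0 ≤ a ∧ 0 ≤ b ∧
      G / H * (if G ≤ 0 then x / lx else y / ly) = b * y - a * x := by
  split_ifs with hG
  · exact ⟨-G / H / lx, 0, div_nonneg (div_nonneg (neg_nonneg.mpr hG) hH) hlx, le_rfl, by ring⟩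
  · exact ⟨0, G / H / ly, le_rfl, by have := le_of_not_ge hG; positivity, by ring⟩

/-- Interface index convention: `Mm α i = M_{α,i+1/2−}`, `Mp α i = M_{α,i+1/2+}`,
`δp α i = δM_{α,i+1/2−}`, `δm α i = δM_{α,i−1/2+}`, and the index `α` of `G`, `Nk`
stands for the interface `α+1/2`. The CFL condition is written in the product form
`(|u_{α,i}| + 2√(2gh_i))·Δt < Δx_i`. -/
theorem topography_scheme_positivity_general
    (g : ℝ) (hg : 0 < g)
    (N : ℕ)
    (l : ℕ → ℝ) (hl : ∀ α ∈ Icc 1 N, 0 < l α)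
    (Δt : ℝ) (hΔt : 0 < Δt)
    (Δx : ℤ → ℝ) (hΔx : ∀ i, 0 < Δx i)
    (σ : ℤ → ℝ) (hσ : ∀ i, σ i = Δt / Δx i)
    (zb : ℤ → ℝ)
    (h : ℤ → ℝ) (hh : ∀ i, 0 ≤ h i)
    (u : ℕ → ℤ → ℝ)
    (zhalf : ℤ → ℝ) (hzhalf : ∀ i : ℤ, zhalf i = max (zb i) (zb (i + 1)))
    (hm : ℤ → ℝ) (hhm : ∀ i : ℤ, hm i = max (h i + zb i - zhalf i) 0)
    (hp : ℤ → ℝ) (hhp : ∀ i : ℤ, hp i = max (h (i + 1) + zb (i + 1) - zhalf i) 0)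
    (M : ℕ → ℤ → ℝ → ℝ)
    (hM : ∀ (α : ℕ) (i : ℤ) (ξ : ℝ), M α i ξ = l α * Mbar g (h i) (u α i) ξ)
    (Mm : ℕ → ℤ → ℝ → ℝ)
    (hMm : ∀ (α : ℕ) (i : ℤ) (ξ : ℝ), Mm α i ξ = l α * Mbar g (hm i) (u α i) ξ)
    (Mp : ℕ → ℤ → ℝ → ℝ)
    (hMp : ∀ (α : ℕ) (i : ℤ) (ξ : ℝ), Mp α i ξ = l α * Mbar g (hp i) (u α (i + 1)) ξ)
    (Mhalf : ℕ → ℤ → ℝ → ℝ)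
    (hMhalf : ∀ (α : ℕ) (i : ℤ) (ξ : ℝ),
      Mhalf α i ξ = if 0 < ξ then Mm α i ξ else Mp α i ξ)
    (δp : ℕ → ℤ → ℝ → ℝ)
    (hδp : ∀ (α : ℕ) (i : ℤ) (ξ : ℝ),
      δp α i ξ = (ξ - u α i) * (M α i ξ - Mm α i ξ))
    (δm : ℕ → ℤ → ℝ → ℝ)
    (hδm : ∀ (α : ℕ) (i : ℤ) (ξ : ℝ),
      δm α i ξ = (ξ - u α i) * (M α i ξ - Mp α (i - 1) ξ))
    (Mstar : ℕ → ℤ → ℝ → ℝ)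
    (hMstar : ∀ (α : ℕ) (i : ℤ) (ξ : ℝ),
      Mstar α i ξ = M α i ξ
        - σ i * (ξ * Mhalf α i ξ + δp α i ξ - ξ * Mhalf α (i - 1) ξ - δm α i ξ))
    (hnew : ℤ → ℝ)
    (G : ℕ → ℤ → ℝ)
    (Mplus Nk : ℕ → ℤ → ℝ → ℝ)
    (hNk0 : ∀ i ξ, Nk 0 i ξ = 0) (hNkN : ∀ i ξ, Nk N i ξ = 0)
    (hNk : ∀ α ∈ Icc 1 (N - 1), ∀ (i : ℤ) (ξ : ℝ),
      Nk α i ξ = G α i / hnew i *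
        (if G α i ≤ 0 then Mplus α i ξ / l α else Mplus (α + 1) i ξ / l (α + 1)))
    (hMplus : ∀ α ∈ Icc 1 N, ∀ (i : ℤ) (ξ : ℝ),
      Mplus α i ξ =
        if 0 < hnew i then Mstar α i ξ + Δt * (Nk α i ξ - Nk (α - 1) i ξ) else 0)
    (CFL : ∀ α ∈ Icc 1 N, ∀ i : ℤ,
      (|u α i| + 2 * Real.sqrt (2 * g * h i)) * Δt < Δx i) :
    ∀ α ∈ Icc 1 N, ∀ (i : ℤ) (ξ : ℝ), 0 ≤ Mplus α i ξ := by
  intro α hα i ξ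
  by_cases hpos : 0 < hnew i
  · have hMstar_nonneg := Mstar_nonneg hg.le (fun k hk => (hl k hk).le) hΔt.le hΔx hσ hh
      hzhalf hhm hhp hM hMm hMp hMhalf hδp hδm hMstar CFL
    refine nonneg_of_upwind_exchange (X := fun k => Mplus k i ξ) (F := fun k => Nk k i ξ) hΔt.le
      (fun k hk => hMstar_nonneg k hk i ξ) (hNk0 i ξ) (hNkN i ξ) (fun k hk => ?_)
      (fun k hk => by rw [hMplus k hk, if_pos hpos]) α hα
    have hk' : k ∈ Icc 1 N ∧ k + 1 ∈ Icc 1 N := by simp only [mem_Icc] at hk ⊢; omega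
    rw [hNk k hk]
    exact upwind_flux_eq hpos.le (hl k hk'.1).le (hl (k + 1) hk'.2).le
  · rw [hMplus α hα i ξ, if_neg hpos]

/-- Positivity of the hydrostatic-reconstruction layer-averaged kinetic scheme with
topography: under the CFL condition `Δt < Δx_i/(|u_{α,i}| + 2√(2gh_i))` (written in
the equivalent product form `(|u_{α,i}| + 2√(2gh_i))·Δt < Δx_i`), the updated kinetic
densities satisfy `M⁺_{α,i}(ξ) ≥ 0` for all `α = 1,…,N`, `i ∈ ℤ`, `ξ ∈ ℝ`.
Interface index convention: `Mm α i = M_{α,i+1/2−}`, `Mp α i = M_{α,i+1/2+}`,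
`δp α i = δM_{α,i+1/2−}`, `δm α i = δM_{α,i−1/2+}`, and the index `α` of `G`, `Nk`
stands for the interface `α+1/2`. -/
theorem topography_scheme_positivity
    (g : ℝ) (hg : 0 < g)
    (N : ℕ) (hN : 1 ≤ N)
    (l : ℕ → ℝ) (hl : ∀ α ∈ Icc 1 N, 0 < l α) (hlsum : ∑ α ∈ Icc 1 N, l α = 1)
    (Δt : ℝ) (hΔt : 0 < Δt)
    (Δx : ℤ → ℝ) (hΔx : ∀ i, 0 < Δx i)
    (σ : ℤ → ℝ) (hσ : ∀ i, σ i = Δt / Δx i)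
    (zb : ℤ → ℝ)
    (h : ℤ → ℝ) (hh : ∀ i, 0 ≤ h i)
    (u : ℕ → ℤ → ℝ)
    (zhalf : ℤ → ℝ) (hzhalf : ∀ i : ℤ, zhalf i = max (zb i) (zb (i + 1)))
    (hm : ℤ → ℝ) (hhm : ∀ i : ℤ, hm i = max (h i + zb i - zhalf i) 0)
    (hp : ℤ → ℝ) (hhp : ∀ i : ℤ, hp i = max (h (i + 1) + zb (i + 1) - zhalf i) 0)
    (M : ℕ → ℤ → ℝ → ℝ)
    (hM : ∀ (α : ℕ) (i : ℤ) (ξ : ℝ), M α i ξ = l α * Mbar g (h i) (u α i) ξ)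
    (Mm : ℕ → ℤ → ℝ → ℝ)
    (hMm : ∀ (α : ℕ) (i : ℤ) (ξ : ℝ), Mm α i ξ = l α * Mbar g (hm i) (u α i) ξ)
    (Mp : ℕ → ℤ → ℝ → ℝ)
    (hMp : ∀ (α : ℕ) (i : ℤ) (ξ : ℝ), Mp α i ξ = l α * Mbar g (hp i) (u α (i + 1)) ξ)
    (Mhalf : ℕ → ℤ → ℝ → ℝ)
    (hMhalf : ∀ (α : ℕ) (i : ℤ) (ξ : ℝ),
      Mhalf α i ξ = if 0 < ξ then Mm α i ξ else Mp α i ξ)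
    (δp : ℕ → ℤ → ℝ → ℝ)
    (hδp : ∀ (α : ℕ) (i : ℤ) (ξ : ℝ),
      δp α i ξ = (ξ - u α i) * (M α i ξ - Mm α i ξ))
    (δm : ℕ → ℤ → ℝ → ℝ)
    (hδm : ∀ (α : ℕ) (i : ℤ) (ξ : ℝ),
      δm α i ξ = (ξ - u α i) * (M α i ξ - Mp α (i - 1) ξ))
    (Mstar : ℕ → ℤ → ℝ → ℝ)
    (hMstar : ∀ (α : ℕ) (i : ℤ) (ξ : ℝ),
      Mstar α i ξ = M α i ξ
        - σ i * (ξ * Mhalf α i ξ + δp α i ξ - ξ * Mhalf α (i - 1) ξ - δm α i ξ))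
    (hnew : ℤ → ℝ)
    (hhnew : ∀ i : ℤ, hnew i = ∑ α ∈ Icc 1 N, ∫ ξ : ℝ, Mstar α i ξ)
    (G : ℕ → ℤ → ℝ)
    (hG0 : ∀ i, G 0 i = 0) (hGN : ∀ i, G N i = 0)
    (hG : ∀ α ∈ Icc 1 (N - 1), ∀ i : ℤ,
      Δx i * G α i =
        ∑ j ∈ Icc 1 α,
          ((∫ ξ : ℝ, ξ * (Mhalf j i ξ - Mhalf j (i - 1) ξ))
            - l j * ∑ p ∈ Icc 1 N, ∫ ξ : ℝ, ξ * (Mhalf p i ξ - Mhalf p (i - 1) ξ)))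
    (Mplus Nk : ℕ → ℤ → ℝ → ℝ)
    (hNk0 : ∀ i ξ, Nk 0 i ξ = 0) (hNkN : ∀ i ξ, Nk N i ξ = 0)
    (hNk : ∀ α ∈ Icc 1 (N - 1), ∀ (i : ℤ) (ξ : ℝ),
      Nk α i ξ = G α i / hnew i *
        (if G α i ≤ 0 then Mplus α i ξ / l α else Mplus (α + 1) i ξ / l (α + 1)))
    (hMplus : ∀ α ∈ Icc 1 N, ∀ (i : ℤ) (ξ : ℝ),
      Mplus α i ξ =
        if 0 < hnew i then Mstar α i ξ + Δt * (Nk α i ξ - Nk (α - 1) i ξ) else 0)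
    (CFL : ∀ α ∈ Icc 1 N, ∀ i : ℤ,
      (|u α i| + 2 * Real.sqrt (2 * g * h i)) * Δt < Δx i) :
    ∀ α ∈ Icc 1 N, ∀ (i : ℤ) (ξ : ℝ), 0 ≤ Mplus α i ξ :=
  topography_scheme_positivity_general g hg N l hl Δt hΔt Δx hΔx σ hσ zb h hh u zhalf hzhalf hm hhm
    hp hhp M hM Mm hMm Mp hMp Mhalf hMhalf δp hδp δm hδm Mstar hMstar hnew G Mplus Nk hNk0 hNkN hNk
    hMplus CFL
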